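/- Visser's ADN theorem: let δ be a partial computable function that is fixed point free on its domain (whenever δ(n) is defined, W_{δ(n)} ≠ W_n). Then for every partial computable function ψ there exists a total computable function f such that for every n: if ψ(n) is defined then W_{f(n)} = W_{ψ(n)}, and if ψ(n) is undefined then δ(f(n)) is undefined. -/

import Mathlib

open Nat.Partrec (Code)

/-- The `e`-th partial computable function, via the standard numbering of codes. -/
def phi (e : ℕ) : ℕ →. ℕ := (Denumerable.ofNat Code e).eval

/-- `W e` is the domain of the `e`-th partial computable function. -/
def W (e : ℕ) : Set ℕ := {n | (phi e n).Dom}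

/-- The halting set ∅'. -/
def K0 : Set ℕ := {e | (phi e e).Dom}

/-- Characteristic function of a set of naturals. -/
noncomputable def chi (A : Set ℕ) : ℕ → ℕ := A.indicator 1

/-- Partial recursiveness relative to an oracle `O : ℕ → ℕ`. -/
inductive RecursiveInO (O : ℕ → ℕ) : (ℕ →. ℕ) → Prop
  | zero : RecursiveInO O (pure 0)
  | succ : RecursiveInO O Nat.succ
  | left : RecursiveInO O fun n => (Nat.unpair n).1
  | right : RecursiveInO O fun n => (Nat.unpair n).2
  | oracle : RecursiveInO O fun n => Part.some (O n)
  | pair {f g} : RecursiveInO O f → RecursiveInO O g →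
      RecursiveInO O fun n => Nat.pair <$> f n <*> g n
  | comp {f g} : RecursiveInO O f → RecursiveInO O g →
      RecursiveInO O fun n => g n >>= f
  | prec {f g} : RecursiveInO O f → RecursiveInO O g →
      RecursiveInO O (Nat.unpaired fun a n =>
        n.rec (f a) fun y IH => do
          let i ← IH
          g (Nat.pair a (Nat.pair y i)))
  | rfind {f} : RecursiveInO O f →
      RecursiveInO O fun a =>
        Nat.rfind fun n => (fun m => m = 0) <$> f (Nat.pair a n)

/-- A total function `f` is Turing reducible to the set `A`. -/
def FuncRecIn (A : Set ℕ) (f : ℕ → ℕ) : Prop :=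
  RecursiveInO (chi A) fun n => Part.some (f n)

/-- A binary total function `h` is Turing reducible to the set `A`. -/
def Func2RecIn (A : Set ℕ) (h : ℕ → ℕ → ℕ) : Prop :=
  RecursiveInO (chi A) fun n => Part.some (h (Nat.unpair n).1 (Nat.unpair n).2)

/-- Turing reducibility between sets of naturals. -/
def SetRecIn (A B : Set ℕ) : Prop := RecursiveInO (chi B) fun n => Part.some (chi A n)

/-- `A` is computably enumerable. -/
def CE (A : Set ℕ) : Prop := REPred (· ∈ A)

/-- Codes for oracle machines. -/
inductive OCode : Type
  | zero | succ | left | right | oracle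
  | pair (cf cg : OCode)
  | comp (cf cg : OCode)
  | prec (cf cg : OCode)
  | rfind' (cf : OCode)

/-- Evaluation of oracle codes relative to an oracle `O`. -/
def OCode.evalo (O : ℕ → ℕ) : OCode → ℕ →. ℕ
  | .zero => pure 0
  | .succ => Nat.succ
  | .left => fun n => Part.some (Nat.unpair n).1
  | .right => fun n => Part.some (Nat.unpair n).2
  | .oracle => fun n => Part.some (O n)
  | .pair cf cg => fun n => Nat.pair <$> evalo O cf n <*> evalo O cg n
  | .comp cf cg => fun n => evalo O cg n >>= evalo O cf
  | .prec cf cg => Nat.unpaired fun a n =>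
      n.rec (evalo O cf a) fun y IH => do
        let i ← IH
        evalo O cg (Nat.pair a (Nat.pair y i))
  | .rfind' cf => Nat.unpaired fun a m =>
      (Nat.rfind fun n => (fun x => x = 0) <$> evalo O cf (Nat.pair a (n + m))).map (· + m)

/-- A standard numbering of oracle codes. -/
def OCode.ofNat : ℕ → OCode
  | 0 => .zero
  | 1 => .succ
  | 2 => .left
  | 3 => .right
  | 4 => .oracle
  | n + 5 =>
    let m := n.div2.div2
    have hm : m < n + 5 := by
      simp only [m, Nat.div2_val]
      exact lt_of_le_of_lt (le_trans (Nat.div_le_self _ _) (Nat.div_le_self _ _))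
        (by omega)
    have _m1 : m.unpair.1 < n + 5 := lt_of_le_of_lt m.unpair_left_le hm
    have _m2 : m.unpair.2 < n + 5 := lt_of_le_of_lt m.unpair_right_le hm
    match n.bodd, n.div2.bodd with
    | false, false => .pair (ofNat m.unpair.1) (ofNat m.unpair.2)
    | false, true  => .comp (ofNat m.unpair.1) (ofNat m.unpair.2)
    | true , false => .prec (ofNat m.unpair.1) (ofNat m.unpair.2)
    | true , true  => .rfind' (ofNat m)
decreasing_by
  all_goals first | exact _m1 | exact _m2 | exact hm

/-- The Turing jump of an oracle `O : ℕ → ℕ`. -/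
def jump (O : ℕ → ℕ) : Set ℕ := {e | (OCode.evalo O (OCode.ofNat e) e).Dom}

/-- A binary partial function `δ` is FPF⁺. -/
def FPFplus (δ : ℕ → ℕ →. ℕ) : Prop :=
  ∀ g : ℕ → ℕ, Computable g → ∃ n, ∀ a ∈ δ n (g n), phi (g n) ≠ phi a

/-! By the recursion theorem with parameters there is a computable `f` such that `φ_{f n}` runs
`ψ n` and `δ (f n)` in parallel and then behaves like `φ_a`, where `a` is the output of the one
that halts. That output can never come from `δ (f n)`: it would give `W (f n) = W (δ (f n))`,
against fixed-point freeness. So as soon as either computation converges, `ψ n` converges and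
`φ_{f n} = φ_{ψ n}`. -/

open Nat.Partrec Encodable

theorem phi_partrec : Partrec₂ phi :=
  Code.eval_part.comp ((Computable.ofNat Code).comp Computable.fst) Computable.snd

theorem W_eq_of_phi_eq {e e' : ℕ} (h : phi e = phi e') : W e = W e' := by
  simp only [W, h]

theorem exists_computable_phi_eq {F : ℕ → ℕ → ℕ →. ℕ}
    (hF : Partrec fun p : ℕ × ℕ × ℕ => F p.1 p.2.1 p.2.2) :
    ∃ f : ℕ → ℕ, Computable f ∧ ∀ n, phi (f n) = F (f n) n := by
  have hcurry : Computable₂ fun (c : Code) (n : ℕ) => encode (c.curry n) :=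
    (Primrec.encode.comp Code.primrec₂_curry).to_comp
  have hn : Computable fun p : Code × ℕ => p.2.unpair.1 :=
    Computable.fst.comp (Computable.unpair.comp Computable.snd)
  have hx : Computable fun p : Code × ℕ => p.2.unpair.2 :=
    Computable.snd.comp (Computable.unpair.comp Computable.snd)
  obtain ⟨c, hc⟩ := Code.fixed_point₂ (f := fun c m => F (encode (c.curry m.unpair.1))
    m.unpair.1 m.unpair.2) <| hF.comp <| (hcurry.comp Computable.fst hn).pair (hn.pair hx)
  refine ⟨fun n => encode (c.curry n), hcurry.comp (Computable.const c) Computable.id, ?_⟩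
  intro n
  funext x
  simp only [phi, Denumerable.ofNat_encode, Code.eval_curry, hc, Nat.unpair_pair]

/-- Visser's ADN theorem. -/
theorem adn (δ : ℕ →. ℕ) (hδ : Nat.Partrec δ)
    (hfpf : ∀ n, ∀ a ∈ δ n, W a ≠ W n)
    (ψ : ℕ →. ℕ) (hψ : Nat.Partrec ψ) :
    ∃ f : ℕ → ℕ, Computable f ∧
      (∀ n, ∀ a ∈ ψ n, W (f n) = W a) ∧
      (∀ n, ¬ (ψ n).Dom → ¬ (δ (f n)).Dom) := by
  obtain ⟨race, hrace, hrace_spec⟩ := Partrec.merge'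
    (Partrec.nat_iff.2 hψ |>.comp Computable.snd) (Partrec.nat_iff.2 hδ |>.comp Computable.fst)
  obtain ⟨f, hf, hphi⟩ :=
    exists_computable_phi_eq (F := fun e n x => (race (e, n)).bind (phi · x)) <|
    ((hrace.comp (Computable.fst.pair (Computable.fst.comp Computable.snd))).bind
      (phi_partrec.comp Computable.snd (Computable.snd.comp (Computable.snd.comp Computable.fst))))
  have hphi_race : ∀ n, ∀ a ∈ race (f n, n), phi (f n) = phi a := by
    intro n a ha
    rw [hphi, Part.eq_some_iff.2 ha]
    exact funext fun x => Part.bind_some a (phi · x)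
  have hψ_wins : ∀ n, ∀ a ∈ race (f n, n), a ∈ ψ n := fun n a ha =>
    ((hrace_spec _).1 a ha).resolve_right fun hδa =>
      hfpf (f n) a hδa (W_eq_of_phi_eq (hphi_race n a ha)).symm
  have hrace_dom (n : ℕ) (h : (ψ n).Dom ∨ (δ (f n)).Dom) : ∃ b, b ∈ race (f n, n) :=
    Part.dom_iff_mem.1 ((hrace_spec (f n, n)).2.2 h)
  refine ⟨f, hf, fun n a ha => ?_, fun n hψn hδn => ?_⟩
  · obtain ⟨b, hb⟩ := hrace_dom n (Or.inl (Part.dom_iff_mem.2 ⟨a, ha⟩))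
    rw [W_eq_of_phi_eq (hphi_race n b hb), Part.mem_unique (hψ_wins n b hb) ha]
  · obtain ⟨b, hb⟩ := hrace_dom n (Or.inr hδn)
    exact hψn (Part.dom_iff_mem.2 ⟨b, hψ_wins n b hb⟩)
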